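/- arXiv:1605.03612 — 2 statements merged into one kernel-verified Lean document; each statement's English description precedes it below -/
import Mathlib

section
/- Let p, n, m be integers with n ≥ m ≥ 0 and p ≥ n + 2m + 2, and let (B, R) be a partition of the edges of K_p. Then (B,R) is (n,m)-free if and only if for every color C ∈ {B,R} and every edge uv ∈ C, either |N_C(u) ∪ N_C(v)| ≤ n + m + 1, or both deg_C(u) ≤ n and deg_C(v) ≤ n. -/
/-!
A double star `S(n,m)` sits on an edge `uv` of a colour exactly when `deg u > n`, `deg v > m` and
`|N(u) ∪ N(v)| ≥ n + m + 2`; this gives the easy direction.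

The converse rests on a degree bound: in an `(n,m)`-free colouring with `p ≥ n + 2m + 2` every
monochromatic degree is at most `n + m`. Indeed, if `deg_B v ≥ n + m + 1`, each blue neighbour of
`v` has blue degree `≤ m`, hence red degree `≥ n + m + 1`, so by the same argument in red its red
neighbours have red degree `≤ m`. As no vertex has degree `≤ m` in both colours, a blue neighbour
`w` of `v` is blue-adjacent to all other blue neighbours of `v`, contradicting `deg_B w ≤ m`.
Now if `uv` is blue with `|N(u) ∪ N(v)| ≥ n + m + 2` and `deg_B u > n`, freeness forces
`deg_B v ≤ m`, so `deg_R v ≥ n + m + 1`, against the degree bound.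
-/

open SimpleGraph Set

/-- `G` contains a copy of the double star `S(n,m)`. -/
def HasDoubleStar {V : Type*} (G : SimpleGraph V) (n m : ℕ) : Prop :=
  ∃ (u v : V) (A B : Finset V), G.Adj u v ∧
    ↑A ⊆ G.neighborSet u ∧ ↑B ⊆ G.neighborSet v ∧
    v ∉ A ∧ u ∉ B ∧ Disjoint A B ∧ A.card = n ∧ B.card = m

/-- Ramsey number of the double star `S(n,m)`. -/
noncomputable def doubleStarRamsey (n m : ℕ) : ℕ :=
  sInf {N : ℕ | ∀ G : SimpleGraph (Fin N), HasDoubleStar G n m ∨ HasDoubleStar Gᶜ n m}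

/-- `G` is a `(δ,η)`-graph. -/
def IsDEGraph {V : Type*} [Fintype V] (δ η : ℝ) (G : SimpleGraph V) : Prop :=
  1 < Fintype.card V ∧
  (∀ v : V, ((G.neighborSet v).ncard : ℝ) + 1 ≥ δ * Fintype.card V) ∧
  (∀ u v : V, G.Adj u v →
    ((G.neighborSet u ∪ G.neighborSet v).ncard : ℝ) ≤ (1 - η) * Fintype.card V)

open Finset

theorem Finset.exists_disjoint_subsets_card_eq {α : Type*} [DecidableEq α] {X Y : Finset α}
    {n m : ℕ} (hX : n ≤ #X) (hY : m ≤ #Y) (hXY : n + m ≤ #(X ∪ Y)) :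
    ∃ A ⊆ X, ∃ B ⊆ Y, Disjoint A B ∧ #A = n ∧ #B = m := by
  obtain hn | hn := le_total n #(X \ Y)
  · obtain ⟨A, hA, rfl⟩ := exists_subset_card_eq hn
    obtain ⟨B, hB, rfl⟩ := exists_subset_card_eq hY
    exact ⟨A, hA.trans sdiff_subset, B, hB, sdiff_disjoint.mono hA hB, rfl, rfl⟩
  · -- Put all of `X \ Y` into `A`; what `A` misses of `X ∪ Y` then lies in `Y`.
    obtain ⟨A, hXYA, hAX, rfl⟩ := exists_subsuperset_card_eq sdiff_subset hn hX
    have hrest : (X ∪ Y) \ A ⊆ Y \ A := by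
      intro a ha
      simp only [mem_sdiff, Finset.mem_union] at ha ⊢
      refine ⟨?_, ha.2⟩
      by_contra haY
      exact ha.2 (hXYA (mem_sdiff.2 ⟨ha.1.resolve_right haY, haY⟩))
    have hm : m ≤ #(Y \ A) := by
      have := Finset.card_le_card hrest
      rw [card_sdiff_of_subset (hAX.trans subset_union_left)] at this
      omega
    obtain ⟨B, hB, rfl⟩ := exists_subset_card_eq hm
    exact ⟨A, hAX, B, hB.trans sdiff_subset, disjoint_sdiff.mono_right hB, rfl, rfl⟩

namespace SimpleGraph

variable {V : Type*} {G : SimpleGraph V} {n m : ℕ}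

theorem ncard_neighborSet (v : V) [Fintype (G.neighborSet v)] :
    (G.neighborSet v).ncard = G.degree v := by
  rw [← coe_neighborFinset, Set.ncard_coe_finset, card_neighborFinset_eq_degree]

theorem ncard_neighborSet_union [DecidableEq V] (u v : V) [Fintype (G.neighborSet u)]
    [Fintype (G.neighborSet v)] :
    (G.neighborSet u ∪ G.neighborSet v).ncard = #(G.neighborFinset u ∪ G.neighborFinset v) := by
  rw [← coe_neighborFinset, ← coe_neighborFinset, ← coe_union, Set.ncard_coe_finset]

section Fintype

variable [Fintype V] [DecidableEq V] [DecidableRel G.Adj]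

theorem degree_add_degree_compl (v : V) : G.degree v + Gᶜ.degree v = Fintype.card V - 1 := by
  have := G.degree_lt_card_verts v
  rw [degree_compl]
  omega

theorem HasDoubleStar.exists_adj (h : HasDoubleStar G n m) :
    ∃ u v, G.Adj u v ∧ n < G.degree u ∧ m < G.degree v ∧
      n + m + 2 ≤ #(G.neighborFinset u ∪ G.neighborFinset v) := by
  obtain ⟨u, v, A, B, huv, hAu, hBv, hvA, huB, hAB, rfl, rfl⟩ := h
  rw [← coe_neighborFinset, Finset.coe_subset] at hAu hBv
  have hvu : v ∈ G.neighborFinset u := (G.mem_neighborFinset u v).2 huv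
  have huv' : u ∈ G.neighborFinset v := (G.mem_neighborFinset v u).2 huv.symm
  have huA : u ∉ A := fun h => G.notMem_neighborFinset_self u (hAu h)
  have hvB : v ∉ B := fun h => G.notMem_neighborFinset_self v (hBv h)
  refine ⟨u, v, huv, ?_, ?_, ?_⟩
  · simpa [card_insert_of_notMem hvA] using Finset.card_le_card (insert_subset hvu hAu)
  · simpa [card_insert_of_notMem huB] using Finset.card_le_card (insert_subset huv' hBv)
  · have hsub : insert u (insert v (A ∪ B)) ⊆ G.neighborFinset u ∪ G.neighborFinset v :=
      insert_subset (mem_union_right _ huv') <| insert_subset (mem_union_left _ hvu) <|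
        union_subset_union hAu hBv
    have := Finset.card_le_card hsub
    rwa [card_insert_of_notMem (by simp [huv.ne, huA, huB]),
      card_insert_of_notMem (by simp [hvA, hvB]), card_union_of_disjoint hAB] at this

theorem hasDoubleStar_of_adj {u v : V} (huv : G.Adj u v) (hu : n < G.degree u)
    (hv : m < G.degree v) (hunion : n + m + 2 ≤ #(G.neighborFinset u ∪ G.neighborFinset v)) :
    HasDoubleStar G n m := by
  have hvu : v ∈ G.neighborFinset u := (G.mem_neighborFinset u v).2 huv
  have huv' : u ∈ G.neighborFinset v := (G.mem_neighborFinset v u).2 huv.symm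
  set X := (G.neighborFinset u).erase v
  set Y := (G.neighborFinset v).erase u
  have hXY : n + m ≤ #(X ∪ Y) := by
    have hsub : G.neighborFinset u ∪ G.neighborFinset v ⊆ insert u (insert v (X ∪ Y)) := by
      intro a
      simp only [X, Y, Finset.mem_union, Finset.mem_insert, Finset.mem_erase]
      tauto
    have := Finset.card_le_card hsub
    have := card_insert_le u (insert v (X ∪ Y))
    have := card_insert_le v (X ∪ Y)
    omega
  obtain ⟨A, hAX, B, hBY, hAB, hA, hB⟩ := exists_disjoint_subsets_card_eq
    (by rw [card_erase_of_mem hvu, card_neighborFinset_eq_degree]; omega)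
    (by rw [card_erase_of_mem huv', card_neighborFinset_eq_degree]; omega) hXY
  refine ⟨u, v, A, B, huv, ?_, ?_, fun h => notMem_erase v _ (hAX h),
    fun h => notMem_erase u _ (hBY h), hAB, hA, hB⟩
  · rw [← coe_neighborFinset, Finset.coe_subset]
    exact hAX.trans (erase_subset _ _)
  · rw [← coe_neighborFinset, Finset.coe_subset]
    exact hBY.trans (erase_subset _ _)

theorem degree_le_of_adj_of_not_hasDoubleStar (hG : ¬ HasDoubleStar G n m) {u v : V}
    (huv : G.Adj u v) (hu : n + m < G.degree u) : G.degree v ≤ m := by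
  by_contra! hv
  refine hG (hasDoubleStar_of_adj huv (by omega) hv ?_)
  have hsub : insert u (G.neighborFinset u) ⊆ G.neighborFinset u ∪ G.neighborFinset v :=
    insert_subset (mem_union_right _ ((G.mem_neighborFinset v u).2 huv.symm)) subset_union_left
  have := Finset.card_le_card hsub
  rw [card_insert_of_notMem (G.notMem_neighborFinset_self u),
    card_neighborFinset_eq_degree] at this
  omega

end Fintype

theorem not_hasDoubleStar_of_forall_adj [Finite V]
    (h : ∀ u v, G.Adj u v → (G.neighborSet u ∪ G.neighborSet v).ncard ≤ n + m + 1 ∨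
      ((G.neighborSet u).ncard ≤ n ∧ (G.neighborSet v).ncard ≤ n)) :
    ¬ HasDoubleStar G n m := by
  have := Fintype.ofFinite V
  classical
  intro hG
  obtain ⟨u, v, huv, hu, -, hunion⟩ := hG.exists_adj
  rw [← ncard_neighborSet] at hu
  rw [← ncard_neighborSet_union] at hunion
  rcases h u v huv with h | h <;> omega

end SimpleGraph

/-- The 2-colouring of the edges of the complete graph on `V` with colour classes `G` and `Gᶜ`
is `(n,m)`-free. -/
def IsDoubleStarFreeColoring {V : Type*} (G : SimpleGraph V) (n m : ℕ) : Prop :=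
  ¬ HasDoubleStar G n m ∧ ¬ HasDoubleStar Gᶜ n m

namespace IsDoubleStarFreeColoring

variable {V : Type*} {G : SimpleGraph V} {n m : ℕ}

theorem compl (h : IsDoubleStarFreeColoring G n m) : IsDoubleStarFreeColoring Gᶜ n m :=
  ⟨h.2, by rw [compl_compl]; exact h.1⟩

section Fintype

variable [Fintype V] [DecidableEq V] [DecidableRel G.Adj]

theorem degree_le (h : IsDoubleStarFreeColoring G n m) (hV : n + 2 * m + 2 ≤ Fintype.card V)
    (v : V) : G.degree v ≤ n + m := by
  by_contra! hv
  have hsmall : ∀ a, G.Adj v a → G.degree a ≤ m :=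
    fun a ha => degree_le_of_adj_of_not_hasDoubleStar h.1 ha hv
  obtain ⟨w, hvw⟩ := (G.degree_pos_iff_exists_adj v).1 (by omega)
  have hwc : n + m < Gᶜ.degree w := by
    have := hsmall w hvw
    have := G.degree_add_degree_compl w
    omega
  have hsub : insert v ((G.neighborFinset v).erase w) ⊆ G.neighborFinset w := by
    refine insert_subset ((G.mem_neighborFinset w v).2 hvw.symm) fun a ha => ?_
    obtain ⟨haw, hva⟩ := Finset.mem_erase.1 ha
    rw [mem_neighborFinset] at hva ⊢
    by_contra hwa
    have := degree_le_of_adj_of_not_hasDoubleStar h.2 ((G.compl_adj w a).2 ⟨haw.symm, hwa⟩) hwc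
    have := hsmall a hva
    have := G.degree_add_degree_compl a
    omega
  have := Finset.card_le_card hsub
  rw [card_insert_of_notMem (by simp), card_erase_of_mem ((G.mem_neighborFinset v w).2 hvw),
    card_neighborFinset_eq_degree, card_neighborFinset_eq_degree] at this
  have := hsmall w hvw
  omega

theorem degree_le_of_adj (h : IsDoubleStarFreeColoring G n m)
    (hV : n + 2 * m + 2 ≤ Fintype.card V) {u v : V} (huv : G.Adj u v)
    (hunion : n + m + 1 < #(G.neighborFinset u ∪ G.neighborFinset v)) : G.degree u ≤ n := by
  by_contra! hu
  have hv : G.degree v ≤ m := by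
    by_contra! hv
    exact h.1 (hasDoubleStar_of_adj huv hu hv hunion)
  have := h.compl.degree_le hV v
  have := G.degree_add_degree_compl v
  omega

end Fintype

theorem ncard_neighborSet_le_of_adj [Finite V] (h : IsDoubleStarFreeColoring G n m)
    (hV : n + 2 * m + 2 ≤ Nat.card V) {u v : V} (huv : G.Adj u v)
    (hunion : n + m + 1 < (G.neighborSet u ∪ G.neighborSet v).ncard) :
    (G.neighborSet u).ncard ≤ n := by
  have := Fintype.ofFinite V
  classical
  rw [Nat.card_eq_fintype_card] at hV
  rw [ncard_neighborSet_union] at hunion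
  rw [ncard_neighborSet]
  exact h.degree_le_of_adj hV huv hunion

end IsDoubleStarFreeColoring

theorem free_iff_degree_conditions_general (p n m : ℕ) (hp : n + 2*m + 2 ≤ p)
    (G : SimpleGraph (Fin p)) :
    (¬ HasDoubleStar G n m ∧ ¬ HasDoubleStar Gᶜ n m) ↔
    (∀ C ∈ ({G, Gᶜ} : Set (SimpleGraph (Fin p))), ∀ u v : Fin p, C.Adj u v →
      ((C.neighborSet u ∪ C.neighborSet v).ncard ≤ n + m + 1 ∨
        ((C.neighborSet u).ncard ≤ n ∧ (C.neighborSet v).ncard ≤ n))) := by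
  have hV : n + 2 * m + 2 ≤ Nat.card (Fin p) := by simpa using hp
  constructor
  · intro (hG : IsDoubleStarFreeColoring G n m) C hC u v huv
    have hC : IsDoubleStarFreeColoring C n m := by
      rcases hC with rfl | rfl
      exacts [hG, hG.compl]
    rw [or_iff_not_imp_left, not_le]
    intro hunion
    exact ⟨hC.ncard_neighborSet_le_of_adj hV huv hunion,
      hC.ncard_neighborSet_le_of_adj hV huv.symm (by rwa [Set.union_comm])⟩
  · intro h
    exact ⟨not_hasDoubleStar_of_forall_adj (h G (by simp)),
      not_hasDoubleStar_of_forall_adj (h Gᶜ (by simp))⟩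

theorem free_iff_degree_conditions (p n m : ℕ) (hnm : m ≤ n) (hp : n + 2*m + 2 ≤ p)
    (G : SimpleGraph (Fin p)) :
    (¬ HasDoubleStar G n m ∧ ¬ HasDoubleStar Gᶜ n m) ↔
    (∀ C ∈ ({G, Gᶜ} : Set (SimpleGraph (Fin p))), ∀ u v : Fin p, C.Adj u v →
      ((C.neighborSet u ∪ C.neighborSet v).ncard ≤ n + m + 1 ∨
        ((C.neighborSet u).ncard ≤ n ∧ (C.neighborSet v).ncard ≤ n))) :=
  free_iff_degree_conditions_general p n m hp G
end

section
/- For every integer k ≥ 1, r(S(2k−1, k−1)) ≥ (21/5)k − o(k); in particular, for every ε > 0 there exists K such that for all k ≥ K, r(S(2k−1, k−1)) ≥ (21/5 − ε)k. Consequently, r(S(2k−1,k−1)) exceeds the Burr bound r_B = 4k − 1 for large k. -/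
/-!
Let `H` be the Kneser graph `K(7,2)` of 2-subsets of a 7-set, adjacent when disjoint; it is the
complement of the line graph of `K₇`. It has 21 vertices, is 10-regular, and any two non-adjacent
vertices (a vertex and itself included) have at least 6 common neighbours. Blow `H` up to `N`
vertices with classes of size `⌊N/21⌋` or `⌊N/21⌋ + 1`. A red `S(2k-1, k-1)` needs a vertex of
degree at least `2k`, while all degrees are at most `10 (⌊N/21⌋ + 1)`. A blue one has `3k` vertices,
none of them a common red neighbour of its two non-adjacent centres, and there are at least
`6 ⌊N/21⌋` of those. Hence both are absent as long as `21 k > 5 N + 105`.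

Since `doubleStarRamsey` is an `sInf`, this bounds it only once the defining set is nonempty; it is,
because every 2-colouring of `2 (n + m + 1) + 1` vertices has a monochromatic `S(n, m)`.
-/

open SimpleGraph Set

open Finset

theorem Fin.card_filter_val_mod_eq (N : ℕ) {q r : ℕ} (hr : r < q) :
    #{x : Fin N | x.val % q = r} = N / q + if r < N % q then 1 else 0 := by
  rw [← Nat.mod_eq_of_lt hr, ← Nat.count_modEq_card _ (by omega) r, Nat.count_eq_card_filter_range,
    ← Nat.Iio_eq_range, ← Fin.map_valEmbedding_univ, filter_map, card_map]
  rfl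

theorem exists_balanced_map (V W : Type*) [Fintype V] [Fintype W] [DecidableEq W] [Nonempty W] :
    ∃ f : V → W, ∀ w, Fintype.card V / Fintype.card W ≤ #{x | f x = w} ∧
      #{x | f x = w} ≤ Fintype.card V / Fintype.card W + 1 := by
  let eV := Fintype.equivFin V
  let eW := Fintype.equivFin W
  have hq : 0 < Fintype.card W := Fintype.card_pos
  refine ⟨fun x => eW.symm ⟨eV x % Fintype.card W, Nat.mod_lt _ hq⟩, fun w => ?_⟩
  have hfib : #{x | eW.symm ⟨eV x % Fintype.card W, Nat.mod_lt _ hq⟩ = w} =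
      #{y : Fin (Fintype.card V) | y.val % Fintype.card W = eW w} :=
    card_equiv eV fun x => by simp [Equiv.symm_apply_eq, Fin.ext_iff]
  rw [hfib, Fin.card_filter_val_mod_eq _ (eW w).isLt]
  split_ifs <;> omega

namespace SimpleGraph

variable {V W : Type*} [Fintype V] [Fintype W] [DecidableEq W] {H : SimpleGraph W}
  [DecidableRel H.Adj] {f : V → W}

theorem neighborFinset_comap (u : V) :
    (H.comap f).neighborFinset u = ({x | f x ∈ H.neighborFinset (f u)} : Finset V) := by
  ext; simp

theorem degree_comap_le {b : ℕ} (hb : ∀ w, #{x | f x = w} ≤ b) (u : V) :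
    (H.comap f).degree u ≤ b * H.degree (f u) := by
  rw [← card_neighborFinset_eq_degree, neighborFinset_comap]
  exact card_le_mul_card_image_of_maps_to (fun x hx => (mem_filter.1 hx).2) b
    fun w hw => (Finset.card_le_card fun x hx => by simp_all).trans (hb w)

theorem le_card_inter_neighborFinset_comap [DecidableEq V] {a : ℕ} (ha : ∀ w, a ≤ #{x | f x = w})
    (u v : V) :
    a * #(H.neighborFinset (f u) ∩ H.neighborFinset (f v)) ≤
      #((H.comap f).neighborFinset u ∩ (H.comap f).neighborFinset v) := by
  rw [neighborFinset_comap, neighborFinset_comap, ← filter_and]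
  refine mul_card_image_le_card_of_maps_to (fun x hx => by simpa using hx) a
    fun w hw => (ha w).trans (Finset.card_le_card fun x hx => ?_)
  simp_all

/-- The conjunct `s ≠ t` only matters for `r = 0`, where `∅` is disjoint from itself. -/
def kneserGraph (α : Type*) (r : ℕ) : SimpleGraph {s : Finset α // #s = r} where
  Adj s t := s ≠ t ∧ Disjoint s.1 t.1
  symm := ⟨fun _ _ h => ⟨h.1.symm, h.2.symm⟩⟩
  loopless := ⟨fun _ h => h.1 rfl⟩

namespace kneserGraph

variable {α : Type*} {r : ℕ}

theorem adj_iff {s t : {s : Finset α // #s = r}} :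
    (kneserGraph α r).Adj s t ↔ s ≠ t ∧ Disjoint s.1 t.1 := Iff.rfl

instance [DecidableEq α] : DecidableRel (kneserGraph α r).Adj :=
  fun _ _ => decidable_of_iff' _ adj_iff

theorem adj_iff_disjoint (hr : 0 < r) {s t : {s : Finset α // #s = r}} :
    (kneserGraph α r).Adj s t ↔ Disjoint s.1 t.1 := by
  refine ⟨And.right, fun h => ⟨fun hst => ?_, h⟩⟩
  subst hst
  have := s.2
  simp_all

variable [DecidableEq α]

theorem card_union_lt_of_not_adj (hr : 0 < r) {s t : {s : Finset α // #s = r}}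
    (hst : ¬ (kneserGraph α r).Adj s t) : #(s.1 ∪ t.1) < 2 * r := by
  rw [adj_iff_disjoint hr, Finset.not_disjoint_iff_nonempty_inter] at hst
  have := card_union_add_card_inter s.1 t.1
  have := hst.card_pos
  rw [s.2, t.2] at *
  omega

variable [Fintype α]

theorem image_val_inter_neighborFinset (hr : 0 < r) (s t : {s : Finset α // #s = r}) :
    ((kneserGraph α r).neighborFinset s ∩ (kneserGraph α r).neighborFinset t).image Subtype.val =
      powersetCard r (s.1 ∪ t.1)ᶜ := by
  ext x
  simp +contextual [adj_iff_disjoint hr, Finset.subset_inter_iff,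
    Finset.subset_compl_iff_disjoint_left]

theorem card_inter_neighborFinset (hr : 0 < r) (s t : {s : Finset α // #s = r}) :
    #((kneserGraph α r).neighborFinset s ∩ (kneserGraph α r).neighborFinset t) =
      (Fintype.card α - #(s.1 ∪ t.1)).choose r := by
  rw [← Finset.card_image_of_injective _ Subtype.val_injective, image_val_inter_neighborFinset hr,
    card_powersetCard, card_compl]

theorem degree_eq (hr : 0 < r) (s : {s : Finset α // #s = r}) :
    (kneserGraph α r).degree s = (Fintype.card α - r).choose r := by
  simpa [s.2] using card_inter_neighborFinset hr s s

theorem choose_le_card_inter_neighborFinset_of_not_adj (hr : 0 < r)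
    {s t : {s : Finset α // #s = r}} (hst : ¬ (kneserGraph α r).Adj s t) :
    (Fintype.card α + 1 - 2 * r).choose r ≤
      #((kneserGraph α r).neighborFinset s ∩ (kneserGraph α r).neighborFinset t) := by
  rw [card_inter_neighborFinset hr]
  have := card_union_lt_of_not_adj hr hst
  exact Nat.choose_le_choose _ (by omega)

end kneserGraph

end SimpleGraph

section

variable {V : Type*} [Fintype V] [DecidableEq V] {G : SimpleGraph V} [DecidableRel G.Adj]
  {n m : ℕ}

theorem HasDoubleStar.exists_lt_degree (h : HasDoubleStar G n m) : ∃ u, n < G.degree u := by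
  obtain ⟨u, v, A, -, huv, hA, -, hvA, -, -, rfl, -⟩ := h
  refine ⟨u, ?_⟩
  rw [← card_neighborFinset_eq_degree, Nat.lt_iff_add_one_le, ← card_insert_of_notMem hvA]
  exact card_le_card <| insert_subset (by simpa using huv) fun x hx => by simpa using hA hx

theorem HasDoubleStar.exists_not_adj_of_compl (h : HasDoubleStar Gᶜ n m) :
    ∃ u v, ¬ G.Adj u v ∧
      n + m + 2 + #(G.neighborFinset u ∩ G.neighborFinset v) ≤ Fintype.card V := by
  obtain ⟨u, v, A, B, huv, hA, hB, hvA, huB, hAB, rfl, rfl⟩ := h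
  have huA : u ∉ A := fun hu => Gᶜ.irrefl (hA hu)
  have hvB : v ∉ B := fun hv => Gᶜ.irrefl (hB hv)
  refine ⟨u, v, ((compl_adj G u v).1 huv).2, ?_⟩
  set S := insert u (insert v (A ∪ B))
  have hS : #S = #A + #B + 2 := by
    rw [card_insert_of_notMem (by simp [huv.ne, huA, huB]),
      card_insert_of_notMem (by simp [hvA, hvB]), card_union_of_disjoint hAB]
  have hdisj : Disjoint S (G.neighborFinset u ∩ G.neighborFinset v) := by
    rw [Finset.disjoint_left]
    intro x hx hcommon
    simp only [Finset.mem_inter, mem_neighborFinset] at hcommon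
    rcases mem_insert.1 hx with rfl | hx
    · exact G.irrefl hcommon.1
    rcases mem_insert.1 hx with rfl | hx
    · exact G.irrefl hcommon.2
    rcases mem_union.1 hx with hx | hx
    · exact ((compl_adj G u x).1 (hA hx)).2 hcommon.1
    · exact ((compl_adj G v x).1 (hB hx)).2 hcommon.2
  rw [← hS, ← card_union_of_disjoint hdisj]
  exact card_le_univ _

theorem hasDoubleStar_of_adj {u v : V} (huv : G.Adj u v) (hu : n + m + 1 ≤ G.degree u)
    (hv : n + m + 1 ≤ G.degree v) : HasDoubleStar G n m := by
  rw [← card_neighborFinset_eq_degree] at hu hv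
  have hvu : v ∈ G.neighborFinset u := by simpa using huv
  have huv' : u ∈ G.neighborFinset v := by simpa using huv.symm
  obtain ⟨A, hA, rfl⟩ := exists_subset_card_eq (s := (G.neighborFinset u).erase v) (n := n)
    (by rw [card_erase_of_mem hvu]; omega)
  obtain ⟨B, hB, rfl⟩ := exists_subset_card_eq (s := (G.neighborFinset v).erase u \ A) (n := m)
    (by have := le_card_sdiff A ((G.neighborFinset v).erase u)
        rw [card_erase_of_mem huv'] at this
        omega)
  refine ⟨u, v, A, B, huv, fun x hx => ?_, fun x hx => ?_, fun hv => ?_, fun hu => ?_,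
    disjoint_of_subset_right hB sdiff_disjoint.symm, rfl, rfl⟩
  · simpa using mem_of_mem_erase (hA hx)
  · simpa using mem_of_mem_erase (mem_sdiff.1 (hB hx)).1
  · exact notMem_erase v _ (hA hv)
  · exact notMem_erase u _ (mem_sdiff.1 (hB hu)).1

theorem hasDoubleStar_or_compl_of_forall_le_degree {S : Finset V} (hS : n + m + 2 ≤ #S)
    (hdeg : ∀ w ∈ S, n + m + 1 ≤ G.degree w) : HasDoubleStar G n m ∨ HasDoubleStar Gᶜ n m := by
  by_cases hadj : ∃ x ∈ S, ∃ y ∈ S, G.Adj x y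
  · obtain ⟨x, hx, y, hy, hxy⟩ := hadj
    exact .inl (hasDoubleStar_of_adj hxy (hdeg x hx) (hdeg y hy))
  push Not at hadj
  have hcompl_adj {x y} (hx : x ∈ S) (hy : y ∈ S) (hxy : x ≠ y) : Gᶜ.Adj x y :=
    (compl_adj G x y).2 ⟨hxy, hadj x hx y hy⟩
  have hcompl_deg (w) (hw : w ∈ S) : n + m + 1 ≤ Gᶜ.degree w := by
    have : S.erase w ⊆ Gᶜ.neighborFinset w := fun x hx => by
      rw [mem_erase] at hx
      simpa using hcompl_adj hw hx.2 hx.1.symm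
    have := Finset.card_le_card this
    rw [card_erase_of_mem hw, card_neighborFinset_eq_degree] at this
    omega
  obtain ⟨x, hx, y, hy, hxy⟩ := one_lt_card.1 (by omega : 1 < #S)
  exact .inr (hasDoubleStar_of_adj (hcompl_adj hx hy hxy) (hcompl_deg x hx) (hcompl_deg y hy))

theorem hasDoubleStar_or_compl_of_lt_card (hV : 2 * (n + m + 1) < Fintype.card V) :
    HasDoubleStar G n m ∨ HasDoubleStar Gᶜ n m := by
  set R : Finset V := {w | n + m + 1 ≤ G.degree w}
  by_cases hR : n + m + 2 ≤ #R
  · exact hasDoubleStar_or_compl_of_forall_le_degree hR fun w hw => (mem_filter.1 hw).2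
  have hRc : n + m + 2 ≤ #Rᶜ := by rw [card_compl]; omega
  refine (hasDoubleStar_or_compl_of_forall_le_degree (G := Gᶜ) hRc fun w hw => ?_).symm.imp_left
    (compl_compl G ▸ ·)
  have hw : G.degree w < n + m + 1 := by simpa [R] using hw
  have := degree_compl G (v := w)
  omega

end

theorem doubleStarRamsey_spec (n m : ℕ)
    (G : SimpleGraph (Fin (doubleStarRamsey n m))) :
    HasDoubleStar G n m ∨ HasDoubleStar Gᶜ n m :=
  Nat.sInf_mem (s := {N | ∀ G : SimpleGraph (Fin N), HasDoubleStar G n m ∨ HasDoubleStar Gᶜ n m})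
    ⟨2 * (n + m + 1) + 1, fun _ => by
      classical exact hasDoubleStar_or_compl_of_lt_card (by simp)⟩ G

theorem le_of_forall_hasDoubleStar_or_compl {N k : ℕ}
    (h : ∀ G : SimpleGraph (Fin N),
      HasDoubleStar G (2 * k - 1) (k - 1) ∨ HasDoubleStar Gᶜ (2 * k - 1) (k - 1)) :
    21 * k ≤ 5 * N + 105 := by
  classical
  let H := kneserGraph (Fin 7) 2
  have hV : Fintype.card {s : Finset (Fin 7) // #s = 2} = 21 := by simp [Nat.choose]
  have hdeg (s) : H.degree s = 10 := by simp [H, kneserGraph.degree_eq two_pos, Nat.choose]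
  have hcommon {s t} (hst : ¬ H.Adj s t) : 6 ≤ #(H.neighborFinset s ∩ H.neighborFinset t) := by
    simpa [Nat.choose] using kneserGraph.choose_le_card_inter_neighborFinset_of_not_adj two_pos hst
  have : Nonempty {s : Finset (Fin 7) // #s = 2} := Fintype.card_pos_iff.1 (by omega)
  obtain ⟨f, hf⟩ := exists_balanced_map (Fin N) {s : Finset (Fin 7) // #s = 2}
  rw [hV, Fintype.card_fin] at hf
  rcases h (H.comap f) with hred | hblue
  · obtain ⟨u, hu⟩ := hred.exists_lt_degree
    have := degree_comap_le (H := H) (fun w => (hf w).2) u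
    rw [hdeg] at this
    omega
  · obtain ⟨u, v, huv, hcard⟩ := hblue.exists_not_adj_of_compl
    have := (Nat.mul_le_mul_left (N / 21) (hcommon huv)).trans
      (le_card_inter_neighborFinset_comap (fun w => (hf w).1) u v)
    rw [Fintype.card_fin] at hcard
    omega

theorem mul_le_doubleStarRamsey (k : ℕ) :
    21 * k ≤ 5 * doubleStarRamsey (2 * k - 1) (k - 1) + 105 :=
  le_of_forall_hasDoubleStar_or_compl (doubleStarRamsey_spec _ _)

theorem ramsey_beats_burr :
    (∀ ε : ℝ, 0 < ε → ∃ K : ℕ, ∀ k : ℕ, K ≤ k →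
      ((21/5 : ℝ) - ε) * k ≤ (doubleStarRamsey (2*k - 1) (k - 1) : ℝ)) ∧
    (∃ K : ℕ, ∀ k : ℕ, K ≤ k →
      4*k - 1 < doubleStarRamsey (2*k - 1) (k - 1)) := by
  refine ⟨fun ε hε => ⟨⌈21 / ε⌉₊, fun k hk => ?_⟩, ⟨101, fun k _ => ?_⟩⟩
  · have hεk : 21 ≤ ε * k := by
      rw [← div_le_iff₀' hε]
      exact Nat.ceil_le.1 hk
    have : (21 * k : ℝ) ≤ 5 * doubleStarRamsey (2 * k - 1) (k - 1) + 105 := by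
      exact_mod_cast mul_le_doubleStarRamsey k
    linarith
  · have := mul_le_doubleStarRamsey k
    omega
end
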